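/- arXiv:1505.00683 — 4 statements merged into one kernel-verified Lean document; each statement's English description precedes it below -/
import Mathlib

section
/- Let G be a connected graph, U the quaternionic transition matrix with entries U_{ef} = q(e) if t(f) = o(e) and f ≠ e^{-1}, U_{ef} = q(e) - 1 if f = e^{-1}, and 0 otherwise, where q: D(G) → H. If U is unitary, then the diagonal condition ((UU*)_{ee} = 1) is equivalent to |q(e)|^2 = 2 Re(q(e)) / deg(o(e)), i.e. q0(e)^2 + q1(e)^2 + q2(e)^2 + q3(e)^2 - 2 q0(e)/d_{o(e)} = 0 for every arc e. -/
open Matrix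

variable {V : Type*} [Fintype V] [DecidableEq V]

/-- The quaternionic transition matrix of a graph, indexed by arcs (darts):
`U e f = q e` if `t(f) = o(e)` and `f ≠ e⁻¹`, `q e - 1` if `f = e⁻¹`, `0` otherwise. -/
noncomputable def transMatrix (G : SimpleGraph V) [DecidableRel G.Adj]
    (q : G.Dart → Quaternion ℝ) : Matrix G.Dart G.Dart (Quaternion ℝ) :=
  fun e f => if f = e.symm then q e - 1 else if f.snd = e.fst then q e else 0

/-!
Row `e` of `U` has the entry `q e - 1` at `e⁻¹`, the entry `q e` at the `d - 1` other arcs ending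
at `o(e)`, and zeros elsewhere, so `(U U*)_{ee} = |q e - 1|² + (d - 1)|q e|² = d |q e|² - 2 Re q e + 1`
with `d = deg o(e) ≥ 1`. This equals `1` exactly when `|q e|² - 2 Re q e / d = 0`.
-/

open Quaternion Finset

theorem Quaternion.normSq_sub_one {R : Type*} [CommRing R] (a : ℍ[R]) :
    normSq (a - 1) = normSq a - 2 * a.re + 1 := by
  simp only [normSq_def', re_sub, imI_sub, imJ_sub, imK_sub, re_one, imI_one, imJ_one, imK_one]
  ring

theorem SimpleGraph.dart_snd_fiber_card_eq_degree (G : SimpleGraph V) [DecidableRel G.Adj]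
    (v : V) : #{d : G.Dart | d.snd = v} = G.degree v := by
  rw [← G.dart_fst_fiber_card_eq_degree]
  exact card_equiv SimpleGraph.Dart.symm_involutive.toPerm (by simp)

section

variable {G : SimpleGraph V} [DecidableRel G.Adj]

omit [Fintype V] in
/-- Since `e⁻¹` also ends at `o(e)`, it is counted by the first summand and corrected by the
second; this splits the row sum into a degree count and a single term. -/
theorem normSq_transMatrix_apply (q : G.Dart → ℍ[ℝ]) (e f : G.Dart) :
    normSq (transMatrix G q e f) =
      (if f.snd = e.fst then normSq (q e) else 0) +
        (if f = e.symm then normSq (q e - 1) - normSq (q e) else 0) := by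
  unfold transMatrix
  by_cases hf : f = e.symm
  · subst hf
    simp
  · split_ifs <;> simp

theorem transMatrix_mul_conjTranspose_apply_self (q : G.Dart → ℍ[ℝ]) (e : G.Dart) :
    (transMatrix G q * (transMatrix G q)ᴴ) e e =
      ((G.degree e.fst * normSq (q e) - 2 * (q e).re + 1 : ℝ) : ℍ[ℝ]) := by
  calc (transMatrix G q * (transMatrix G q)ᴴ) e e
      = ∑ f, transMatrix G q e f * star (transMatrix G q e f) := by
        simp only [mul_apply, conjTranspose_apply]
    _ = ((∑ f, normSq (transMatrix G q e f) : ℝ) : ℍ[ℝ]) := by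
        simp only [self_mul_star, ← algebraMap_def, map_sum]
    _ = _ := by
        simp only [normSq_transMatrix_apply, sum_add_distrib, sum_ite_eq', mem_univ, if_true]
        rw [← sum_filter, sum_const, G.dart_snd_fiber_card_eq_degree, nsmul_eq_mul,
          normSq_sub_one]
        congr 1
        ring

end

theorem transMatrix_diag_unitary_condition_general (G : SimpleGraph V) [DecidableRel G.Adj]
    (q : G.Dart → Quaternion ℝ) (e : G.Dart) :
    ((transMatrix G q * (transMatrix G q)ᴴ) e e = 1) ↔
      (q e).re ^ 2 + (q e).imI ^ 2 + (q e).imJ ^ 2 + (q e).imK ^ 2 -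
        2 * (q e).re / (G.degree e.fst : ℝ) = 0 := by
  have hdeg : (G.degree e.fst : ℝ) ≠ 0 := by
    exact_mod_cast ((G.degree_pos_iff_exists_adj e.fst).2 ⟨e.snd, e.adj⟩).ne'
  rw [transMatrix_mul_conjTranspose_apply_self, ← Quaternion.coe_one, Quaternion.coe_inj, ← normSq_def',
    sub_eq_zero, eq_div_iff hdeg]
  constructor <;> intro h <;> linarith

/-- The diagonal condition `(U U*)_{ee} = 1` is equivalent to
`q0(e)² + q1(e)² + q2(e)² + q3(e)² - 2 q0(e)/d_{o(e)} = 0`. -/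
theorem transMatrix_diag_unitary_condition (G : SimpleGraph V) [DecidableRel G.Adj]
    (hG : G.Connected) (q : G.Dart → Quaternion ℝ) (e : G.Dart) :
    ((transMatrix G q * (transMatrix G q)ᴴ) e e = 1) ↔
      (q e).re ^ 2 + (q e).imI ^ 2 + (q e).imJ ^ 2 + (q e).imK ^ 2 -
        2 * (q e).re / (G.degree e.fst : ℝ) = 0 :=
  transMatrix_diag_unitary_condition_general G q e
end

section
/- If the quaternionic transition matrix U of a connected graph G is unitary, then q(e) = q(f) for any two arcs e, f with the same origin o(e) = o(f). -/
open Matrix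

variable {V : Type*} [Fintype V] [DecidableEq V]

open Finset in
private lemma key_eq (G : SimpleGraph V) [DecidableRel G.Adj]
    (q : G.Dart → Quaternion ℝ)
    (hU : transMatrix G q * (transMatrix G q)ᴴ = 1)
    (e g : G.Dart) (h : e.fst = g.fst) :
    ((Finset.univ.filter (fun f : G.Dart => f.snd = e.fst)).card) •
      (q e * star (q g)) = q e + star (q g) := by
  have hent := Matrix.ext_iff.mpr hU e g
  rw [Matrix.mul_apply, Matrix.one_apply] at hent
  have hsum : ∀ f : G.Dart,
      transMatrix G q e f * ((transMatrix G q)ᴴ f g) =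
      (if f.snd = e.fst then q e * star (q g) else 0)
      - (if f = e.symm then star (q g) else 0)
      - (if f = g.symm then q e else 0)
      + (if f = e.symm ∧ e = g then 1 else 0) := by
    intro f
    rw [Matrix.conjTranspose_apply]
    have hsymm : ∀ (d : G.Dart), d.symm.snd = d.fst := fun _ => rfl
    have hinj : ∀ (a b : G.Dart), a.symm = b.symm → a = b := by
      intro a b hab
      have := congrArg SimpleGraph.Dart.symm hab; simpa using this
    simp only [transMatrix]
    by_cases h1 : f = e.symm
    · by_cases h2 : e = g
      · subst h2; subst h1
        simp [hsymm, star_sub, star_one, sub_mul, mul_sub]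
        noncomm_ring
      · have h3 : f ≠ g.symm := fun hf => h2 (hinj _ _ (h1 ▸ hf))
        subst h1
        simp [hsymm, h2, h3, h, star_sub, star_one, sub_mul, mul_sub]
    · by_cases h3 : f = g.symm
      · have h2 : ¬ (e = g) := fun hg => h1 (h3.trans (hg ▸ rfl))
        subst h3
        simp [hsymm, h1, h2, ← h, star_sub, star_one, sub_mul, mul_sub]
      · by_cases h4 : f.snd = e.fst
        · simp [h1, h3, h4, h]
        · have h5 : ¬ (f.snd = g.fst) := fun hh => h4 (hh.trans h.symm)
          simp [h1, h3, h4, h5]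
  rw [Finset.sum_congr rfl (fun f _ => hsum f)] at hent
  rw [Finset.sum_add_distrib, Finset.sum_sub_distrib, Finset.sum_sub_distrib,
    Finset.sum_ite_eq' univ e.symm, Finset.sum_ite_eq' univ g.symm] at hent
  have hc : (∑ f : G.Dart, if f.snd = e.fst then q e * star (q g) else 0) =
      ((Finset.univ.filter (fun f : G.Dart => f.snd = e.fst)).card) •
        (q e * star (q g)) := by
    rw [← Finset.sum_filter, Finset.sum_const]
  have hd : (∑ f : G.Dart, if f = e.symm ∧ e = g then (1 : Quaternion ℝ) else 0) =
      if e = g then 1 else 0 := by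
    by_cases h2 : e = g <;> simp [h2]
  rw [hc, hd] at hent
  simp only [Finset.mem_univ, if_true] at hent
  have h6 := add_right_cancel (hent.trans (zero_add _).symm)
  rw [sub_sub, sub_eq_zero] at h6
  rw [h6, add_comm]

/-- If the quaternionic transition matrix is unitary, then `q(e) = q(f)` for any two
arcs with the same origin. -/
theorem unitary_implies_equal_weights (G : SimpleGraph V) [DecidableRel G.Adj]
    (hG : G.Connected) (q : G.Dart → Quaternion ℝ)
    (hU : (transMatrix G q)ᴴ * transMatrix G q = 1 ∧
          transMatrix G q * (transMatrix G q)ᴴ = 1)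
    (e f : G.Dart) (h : e.fst = f.fst) : q e = q f := by
  set n : ℕ := (Finset.univ.filter (fun d : G.Dart => d.snd = e.fst)).card with hn
  have h1 := key_eq G q hU.2 e f h
  have h2 := key_eq G q hU.2 f f rfl
  rw [show f.fst = e.fst from h.symm] at h2
  rw [← hn] at h1 h2
  by_cases hb : q f = 0
  · rw [hb] at h1 ⊢
    simpa using h1.symm
  · have h2' : (n • (((Quaternion.normSq (q f) : ℝ) : Quaternion ℝ))) = q f + star (q f) := by
      rw [← Quaternion.self_mul_star]; exact h2
    have h3 : q e * (q f + star (q f)) = (q e + star (q f)) * q f := by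
      calc q e * (q f + star (q f)) = q e * (n • (((Quaternion.normSq (q f) : ℝ) : Quaternion ℝ))) := by
            rw [h2']
        _ = n • (q e * (((Quaternion.normSq (q f) : ℝ) : Quaternion ℝ))) := by
            rw [mul_smul_comm]
        _ = n • (q e * (star (q f) * q f)) := by rw [Quaternion.star_mul_self]
        _ = n • (q e * star (q f)) * q f := by rw [smul_mul_assoc, mul_assoc]
        _ = (q e + star (q f)) * q f := by rw [h1]
    have h5 : q e * star (q f) = star (q f) * q f := by
      rw [mul_add, add_mul] at h3
      exact add_left_cancel h3
    have h4 : (q e - q f) * star (q f) = 0 := by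
      rw [sub_mul, h5, Quaternion.self_mul_star, Quaternion.star_mul_self, sub_self]
    rcases mul_eq_zero.mp h4 with h6 | h6
    · exact sub_eq_zero.mp h6
    · exact absurd (star_eq_zero.mp h6) hb
end

section
/- The quaternionic transition matrix U is unitary if and only if q(e) = q(f) whenever o(e) = o(f), and |q(e)|^2 = 2 Re(q(e))/d_{o(e)} for every arc e. -/
open Matrix

variable {V : Type*} [Fintype V] [DecidableEq V]

namespace TransAux

open Finset SimpleGraph Quaternion

variable (G : SimpleGraph V) [DecidableRel G.Adj] (q : G.Dart → Quaternion ℝ)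

omit [Fintype V] [DecidableEq V] [DecidableRel G.Adj] in
lemma symm_eq_iff (e g : G.Dart) : g = e.symm ↔ e = g.symm := by
  constructor <;> rintro rfl <;> simp [Dart.symm_symm]

lemma entry (e f : G.Dart) :
    transMatrix G q e f =
      (if f.snd = e.fst then q e else 0) - (if f = e.symm then 1 else 0) := by
  unfold transMatrix
  by_cases h : f = e.symm
  · subst h; simp
  · simp [h]

lemma card_snd_fiber (v : V) :
    (univ.filter fun d : G.Dart => d.snd = v).card = G.degree v := by
  rw [← G.dart_fst_fiber_card_eq_degree v]
  apply Finset.card_bij (fun d _ => d.symm)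
  · intro d hd
    simp only [mem_filter, mem_univ, true_and] at hd ⊢
    exact hd
  · intro a _ b _ h
    exact Dart.symm_involutive.injective h
  · intro b hb
    simp only [mem_filter, mem_univ, true_and] at hb
    exact ⟨b.symm, by simpa [Dart.symm_symm] using hb, (Dart.symm_symm b).symm⟩

/-- The sum of `normSq (q e)` over darts with origin `v`. -/
noncomputable def S (v : V) : Quaternion ℝ :=
  ∑ e ∈ univ.filter (fun e : G.Dart => e.fst = v), ((normSq (q e) : ℝ) : Quaternion ℝ)

lemma left_entry (f g : G.Dart) :
    ((transMatrix G q)ᴴ * transMatrix G q) f g =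
      (if f.snd = g.snd then S G q f.snd - q f.symm - star (q g.symm) else 0) +
        (if f = g then 1 else 0) := by
  simp only [Matrix.mul_apply, Matrix.conjTranspose_apply, entry, star_sub, sub_mul, mul_sub,
    star_one]
  rw [Finset.sum_sub_distrib, Finset.sum_sub_distrib, Finset.sum_sub_distrib]
  have h1 : ∑ e : G.Dart, star (if f.snd = e.fst then q e else 0) *
      (if g.snd = e.fst then q e else 0) =
      if f.snd = g.snd then S G q f.snd else 0 := by
    by_cases hfg : f.snd = g.snd
    · rw [if_pos hfg, ← hfg, S, Finset.sum_filter]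
      refine Finset.sum_congr rfl fun e _ => ?_
      by_cases h : e.fst = f.snd
      · rw [if_pos h, if_pos h.symm, Quaternion.star_mul_self]
      · rw [if_neg h, if_neg (fun hh => h hh.symm), star_zero, zero_mul]
    · rw [if_neg hfg]
      refine Finset.sum_eq_zero fun e _ => ?_
      by_cases h : f.snd = e.fst
      · rw [if_neg (fun hh : g.snd = e.fst => hfg (h.trans hh.symm)), mul_zero]
      · rw [if_neg h, star_zero, zero_mul]
  have h2 : ∑ e : G.Dart, star (if f.snd = e.fst then q e else 0) *
      (if g = e.symm then (1 : Quaternion ℝ) else 0) =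
      if f.snd = g.snd then star (q g.symm) else 0 := by
    have key : ∀ e : G.Dart, star (if f.snd = e.fst then q e else 0) *
        (if g = e.symm then (1 : Quaternion ℝ) else 0) =
        if e = g.symm then (if f.snd = g.snd then star (q g.symm) else 0) else 0 := by
      intro e
      by_cases he : e = g.symm
      · subst he
        by_cases h : f.snd = g.snd <;> simp [Dart.symm_symm, h]
      · have hg : ¬ g = e.symm := fun hh => he ((symm_eq_iff G e g).mp hh)
        simp [he, hg]
    rw [Finset.sum_congr rfl fun e _ => key e, Finset.sum_ite_eq' univ g.symm,
      if_pos (mem_univ _)]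
  have h3 : ∑ e : G.Dart, star (if f = e.symm then (1 : Quaternion ℝ) else 0) *
      (if g.snd = e.fst then q e else 0) =
      if f.snd = g.snd then q f.symm else 0 := by
    have key : ∀ e : G.Dart, star (if f = e.symm then (1 : Quaternion ℝ) else 0) *
        (if g.snd = e.fst then q e else 0) =
        if e = f.symm then (if f.snd = g.snd then q f.symm else 0) else 0 := by
      intro e
      by_cases he : e = f.symm
      · subst he
        by_cases h : f.snd = g.snd <;> simp [Dart.symm_symm, h, eq_comm (a := g.snd)]
      · have hg : ¬ f = e.symm := fun hh => he ((symm_eq_iff G e f).mp hh)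
        simp [he, hg]
    rw [Finset.sum_congr rfl fun e _ => key e, Finset.sum_ite_eq' univ f.symm,
      if_pos (mem_univ _)]
  have h4 : ∑ e : G.Dart, star (if f = e.symm then (1 : Quaternion ℝ) else 0) *
      (if g = e.symm then (1 : Quaternion ℝ) else 0) =
      if f = g then (1 : Quaternion ℝ) else 0 := by
    have key : ∀ e : G.Dart, star (if f = e.symm then (1 : Quaternion ℝ) else 0) *
        (if g = e.symm then (1 : Quaternion ℝ) else 0) =
        if e = f.symm then (if f = g then (1 : Quaternion ℝ) else 0) else 0 := by
      intro e
      by_cases he : e = f.symm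
      · subst he
        by_cases h : f = g <;> simp [Dart.symm_symm, h, eq_comm (a := g)]
      · have hg : ¬ f = e.symm := fun hh => he ((symm_eq_iff G e f).mp hh)
        simp [he, hg]
    rw [Finset.sum_congr rfl fun e _ => key e, Finset.sum_ite_eq' univ f.symm,
      if_pos (mem_univ _)]
  rw [h1, h2, h3, h4]
  by_cases hfg : f.snd = g.snd
  · simp only [if_pos hfg]; abel
  · have hfg' : f ≠ g := fun h => hfg (h ▸ rfl)
    simp only [if_neg hfg, if_neg hfg']
    abel

lemma right_entry (e e' : G.Dart) :
    (transMatrix G q * (transMatrix G q)ᴴ) e e' =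
      (if e.fst = e'.fst then
          ((G.degree e.fst : ℝ) : Quaternion ℝ) * (q e * star (q e')) - q e - star (q e')
        else 0) + (if e = e' then 1 else 0) := by
  simp only [Matrix.mul_apply, Matrix.conjTranspose_apply, entry, star_sub, sub_mul, mul_sub,
    star_one]
  rw [Finset.sum_sub_distrib, Finset.sum_sub_distrib, Finset.sum_sub_distrib]
  have h1 : ∑ f : G.Dart, (if f.snd = e.fst then q e else 0) *
      star (if f.snd = e'.fst then q e' else 0) =
      if e.fst = e'.fst then
        ((G.degree e.fst : ℝ) : Quaternion ℝ) * (q e * star (q e')) else 0 := by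
    by_cases hee : e.fst = e'.fst
    · rw [if_pos hee, ← hee]
      have key : ∀ f : G.Dart, (if f.snd = e.fst then q e else 0) *
          star (if f.snd = e.fst then q e' else 0) =
          if f.snd = e.fst then q e * star (q e') else 0 := by
        intro f; by_cases h : f.snd = e.fst <;> simp [h]
      rw [Finset.sum_congr rfl fun f _ => key f, ← Finset.sum_filter, Finset.sum_const,
        card_snd_fiber, nsmul_eq_mul]
      norm_cast
    · rw [if_neg hee]
      refine Finset.sum_eq_zero fun f _ => ?_
      by_cases h : f.snd = e.fst
      · rw [if_neg (fun hh : f.snd = e'.fst => hee (h.symm.trans hh)), star_zero, mul_zero]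
      · rw [if_neg h, zero_mul]
  have h2 : ∑ f : G.Dart, (if f.snd = e.fst then q e else 0) *
      star (if f = e'.symm then (1 : Quaternion ℝ) else 0) =
      if e.fst = e'.fst then q e else 0 := by
    have key : ∀ f : G.Dart, (if f.snd = e.fst then q e else 0) *
        star (if f = e'.symm then (1 : Quaternion ℝ) else 0) =
        if f = e'.symm then (if e.fst = e'.fst then q e else 0) else 0 := by
      intro f
      by_cases hf : f = e'.symm
      · subst hf
        by_cases h : e.fst = e'.fst
        · simp [h.symm]
        · have h' : ¬ (e'.fst = e.fst) := fun hh => h hh.symm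
          simp [h, h']
      · simp [hf]
    rw [Finset.sum_congr rfl fun f _ => key f, Finset.sum_ite_eq' univ e'.symm,
      if_pos (mem_univ _)]
  have h3 : ∑ f : G.Dart, (if f = e.symm then (1 : Quaternion ℝ) else 0) *
      star (if f.snd = e'.fst then q e' else 0) =
      if e.fst = e'.fst then star (q e') else 0 := by
    have key : ∀ f : G.Dart, (if f = e.symm then (1 : Quaternion ℝ) else 0) *
        star (if f.snd = e'.fst then q e' else 0) =
        if f = e.symm then (if e.fst = e'.fst then star (q e') else 0) else 0 := by
      intro f
      by_cases hf : f = e.symm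
      · subst hf
        by_cases h : e.fst = e'.fst <;> simp [h]
      · simp [hf]
    rw [Finset.sum_congr rfl fun f _ => key f, Finset.sum_ite_eq' univ e.symm,
      if_pos (mem_univ _)]
  have h4 : ∑ f : G.Dart, (if f = e.symm then (1 : Quaternion ℝ) else 0) *
      star (if f = e'.symm then (1 : Quaternion ℝ) else 0) =
      if e = e' then (1 : Quaternion ℝ) else 0 := by
    have key : ∀ f : G.Dart, (if f = e.symm then (1 : Quaternion ℝ) else 0) *
        star (if f = e'.symm then (1 : Quaternion ℝ) else 0) =
        if f = e.symm then (if e = e' then (1 : Quaternion ℝ) else 0) else 0 := by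
      intro f
      by_cases hf : f = e.symm
      · subst hf
        by_cases h : e = e'
        · subst h; simp [Dart.symm_symm]
        · have h' : ¬ (e.symm = e'.symm) := fun hh => h (Dart.symm_involutive.injective hh)
          simp [h, h', Dart.symm_symm]
      · simp [hf]
    rw [Finset.sum_congr rfl fun f _ => key f, Finset.sum_ite_eq' univ e.symm,
      if_pos (mem_univ _)]
  rw [h1, h2, h3, h4]
  by_cases hee : e.fst = e'.fst
  · simp only [if_pos hee]; abel
  · have hee' : e ≠ e' := fun h => hee (h ▸ rfl)
    simp only [if_neg hee, if_neg hee']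
    abel

lemma left_iff :
    (transMatrix G q)ᴴ * transMatrix G q = 1 ↔
      ∀ f g : G.Dart, f.snd = g.snd → S G q f.snd = q f.symm + star (q g.symm) := by
  rw [← Matrix.ext_iff]
  constructor
  · intro h f g hfg
    have H := h f g
    rw [left_entry, Matrix.one_apply, if_pos hfg] at H
    have h0 : S G q f.snd - q f.symm - star (q g.symm) = 0 := by
      have := eq_sub_of_add_eq H
      simpa using this
    rw [sub_sub, sub_eq_zero] at h0
    exact h0
  · intro h f g
    rw [left_entry, Matrix.one_apply]
    by_cases hfg : f.snd = g.snd
    · rw [if_pos hfg, sub_sub, h f g hfg, sub_self, zero_add]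
    · rw [if_neg hfg, zero_add]

lemma right_iff :
    transMatrix G q * (transMatrix G q)ᴴ = 1 ↔
      ∀ e e' : G.Dart, e.fst = e'.fst →
        ((G.degree e.fst : ℝ) : Quaternion ℝ) * (q e * star (q e')) = q e + star (q e') := by
  rw [← Matrix.ext_iff]
  constructor
  · intro h e e' hee
    have H := h e e'
    rw [right_entry, Matrix.one_apply, if_pos hee] at H
    have h0 : ((G.degree e.fst : ℝ) : Quaternion ℝ) * (q e * star (q e')) - q e - star (q e')
        = 0 := by
      have := eq_sub_of_add_eq H
      simpa using this
    rw [sub_sub, sub_eq_zero] at h0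
    exact h0
  · intro h e e'
    rw [right_entry, Matrix.one_apply]
    by_cases hee : e.fst = e'.fst
    · rw [if_pos hee, sub_sub, h e e' hee, sub_self, zero_add]
    · rw [if_neg hee, zero_add]

lemma Ssum (hq : ∀ e f : G.Dart, e.fst = f.fst → q e = q f) (e : G.Dart) :
    S G q e.fst = (((G.degree e.fst : ℝ) * normSq (q e) : ℝ) : Quaternion ℝ) := by
  have key : ∀ e' ∈ Finset.univ.filter (fun e' : G.Dart => e'.fst = e.fst),
      ((normSq (q e') : ℝ) : Quaternion ℝ) = ((normSq (q e) : ℝ) : Quaternion ℝ) := by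
    intro e' he'
    simp only [mem_filter, mem_univ, true_and] at he'
    rw [hq e' e he']
  rw [S, Finset.sum_congr rfl key, Finset.sum_const,
    G.dart_fst_fiber_card_eq_degree, nsmul_eq_mul]
  push_cast
  ring

lemma deg_pos (e : G.Dart) : (0 : ℝ) < (G.degree e.fst : ℝ) := by
  exact_mod_cast (G.degree_pos_iff_exists_adj e.fst).mpr ⟨e.snd, e.adj⟩

end TransAux

/-- The quaternionic transition matrix is unitary iff `q(e) = q(f)` whenever
`o(e) = o(f)` and `|q(e)|² = 2 Re(q(e))/d_{o(e)}` for every arc `e`. -/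
theorem transMatrix_unitary_iff (G : SimpleGraph V) [DecidableRel G.Adj]
    (hG : G.Connected) (q : G.Dart → Quaternion ℝ) :
    ((transMatrix G q)ᴴ * transMatrix G q = 1 ∧
      transMatrix G q * (transMatrix G q)ᴴ = 1) ↔
    ((∀ e f : G.Dart, e.fst = f.fst → q e = q f) ∧
      ∀ e : G.Dart,
        (q e).re ^ 2 + (q e).imI ^ 2 + (q e).imJ ^ 2 + (q e).imK ^ 2 -
          2 * (q e).re / (G.degree e.fst : ℝ) = 0) := by
  open TransAux SimpleGraph Quaternion in
  constructor
  · rintro ⟨h1, -⟩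
    rw [left_iff] at h1
    have hq : ∀ e f : G.Dart, e.fst = f.fst → q e = q f := by
      intro e f hef
      have ha : S G q e.fst = q e + star (q e) := by
        have := h1 e.symm e.symm rfl
        rwa [Dart.symm_symm] at this
      have hb : S G q e.fst = q e + star (q f) := by
        have := h1 e.symm f.symm (show e.symm.snd = f.symm.snd from hef)
        rwa [Dart.symm_symm, Dart.symm_symm] at this
      exact star_injective (add_left_cancel (ha.symm.trans hb))
    refine ⟨hq, fun e => ?_⟩
    have hd := deg_pos G e
    have ha : S G q e.fst = q e + star (q e) := by
      have := h1 e.symm e.symm rfl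
      rwa [Dart.symm_symm] at this
    rw [Ssum G q hq e, Quaternion.self_add_star', Quaternion.coe_inj] at ha
    have hn : normSq (q e) =
        (q e).re ^ 2 + (q e).imI ^ 2 + (q e).imJ ^ 2 + (q e).imK ^ 2 :=
      Quaternion.normSq_def' (q e)
    rw [hn] at ha
    rw [sub_eq_zero, eq_div_iff hd.ne']
    linear_combination ha
  · rintro ⟨hq, hn⟩
    have hreal : ∀ e : G.Dart, (G.degree e.fst : ℝ) * normSq (q e) = 2 * (q e).re := by
      intro e
      have hd := deg_pos G e
      have := hn e
      rw [sub_eq_zero, eq_div_iff hd.ne'] at this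
      have hnn : normSq (q e) =
          (q e).re ^ 2 + (q e).imI ^ 2 + (q e).imJ ^ 2 + (q e).imK ^ 2 :=
        Quaternion.normSq_def' (q e)
      rw [hnn]
      linear_combination this
    constructor
    · rw [left_iff]
      intro f g hfg
      have hgf : q g.symm = q f.symm :=
        hq g.symm f.symm (show g.snd = f.snd from hfg.symm)
      have hS : S G q f.snd = (((G.degree f.symm.fst : ℝ) * normSq (q f.symm) : ℝ)
          : Quaternion ℝ) := Ssum G q hq f.symm
      rw [hS, hgf, hreal f.symm, ← Quaternion.self_add_star']
    · rw [right_iff]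
      intro e e' hee
      rw [hq e' e hee.symm, Quaternion.self_mul_star, ← Quaternion.coe_mul,
        hreal e, ← Quaternion.self_add_star']
end

section
/- Let G be a connected graph with n vertices, m edges, and W a weighted matrix of G (W_{uv} = 0 unless (u,v) is an arc). Define the 2m×2m matrix B_w by (B_w)_{ef} = w(f) if t(e) = o(f) and 0 otherwise, and J_0 by (J_0)_{ef} = 1 if f = e^{-1} and 0 otherwise. Then det(I_{2m} - t(B_w - J_0)) = (1 - t^2)^{m-n} det(I_n - tW + t^2(D_w - I_n)), where D_w is diagonal with (D_w)_{uu} = Σ_{e : o(e)=u} w(e). -/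
open Matrix

set_option linter.unusedSectionVars false

namespace SecondZetaAux

variable {V : Type*} [Fintype V] [DecidableEq V]
  (G : SimpleGraph V) [DecidableRel G.Adj] (W : Matrix V V ℂ)

def Sw : Matrix V G.Dart ℂ :=
  Matrix.of fun u e => if e.fst = u then W e.fst e.snd else 0

def Nm : Matrix G.Dart V ℂ :=
  Matrix.of fun e u => if e.snd = u then (1 : ℂ) else 0

def Jm : Matrix G.Dart G.Dart ℂ :=
  Matrix.of fun e f => if f = e.symm then (1 : ℂ) else 0

lemma symm_fst (d : G.Dart) : d.symm.fst = d.snd := rfl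
lemma symm_snd (d : G.Dart) : d.symm.snd = d.fst := rfl

lemma Bw_eq : Nm G * Sw G W =
    Matrix.of (fun e f : G.Dart => if f.fst = e.snd then W f.fst f.snd else 0) := by
  ext e f
  simp [Nm, Sw, Matrix.mul_apply, ite_mul, eq_comm]

lemma JJ : Jm G * Jm G = 1 := by
  ext e f
  rw [Matrix.mul_apply, Finset.sum_eq_single e.symm]
  · simp [Jm, Matrix.one_apply, SimpleGraph.Dart.symm_symm, eq_comm]
  · intro x _ hx
    simp [Jm, hx]
  · simp

lemma Sw_mul_Nm (hW : ∀ u v : V, ¬G.Adj u v → W u v = 0) : Sw G W * Nm G = W := by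
  ext u v
  rw [Matrix.mul_apply]
  by_cases h : G.Adj u v
  · rw [Finset.sum_eq_single (SimpleGraph.Dart.mk (u, v) h)]
    · simp [Sw, Nm]
    · intro e _ hne
      simp only [Sw, Nm, Matrix.of_apply, ite_mul, one_mul, zero_mul]
      rcases eq_or_ne e.fst u with h1 | h1
      · rcases eq_or_ne e.snd v with h2 | h2
        · exact absurd (SimpleGraph.Dart.ext _ _ (Prod.ext h1 h2)) hne
        · simp [h1, h2]
      · simp [h1]
    · simp
  · rw [hW u v h]
    apply Finset.sum_eq_zero
    intro e _
    simp only [Sw, Nm, Matrix.of_apply, ite_mul, one_mul, zero_mul]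
    rcases eq_or_ne e.fst u with h1 | h1
    · rcases eq_or_ne e.snd v with h2 | h2
      · exact absurd (h1 ▸ h2 ▸ e.adj) h
      · simp [h1, h2]
    · simp [h1]

lemma Jm_mul_Nm : Jm G * Nm G =
    Matrix.of (fun (e : G.Dart) u => if e.fst = u then (1 : ℂ) else 0) := by
  ext e u
  rw [Matrix.mul_apply, Finset.sum_eq_single e.symm]
  · simp [Jm, Nm, symm_snd]
  · intro x _ hx
    simp [Jm, hx]
  · simp

lemma Sw_mul_Jm_mul_Nm : Sw G W * (Jm G * Nm G) =
    Matrix.diagonal (fun u => ∑ e : G.Dart, if e.fst = u then W e.fst e.snd else 0) := by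
  rw [Jm_mul_Nm]
  ext u v
  rw [Matrix.mul_apply, Matrix.diagonal_apply]
  rcases eq_or_ne u v with h | h
  · subst h
    rw [if_pos rfl]
    apply Finset.sum_congr rfl
    intro e _
    rcases eq_or_ne e.fst u with h1 | h1 <;> simp [Sw, h1]
  · rw [if_neg h]
    apply Finset.sum_eq_zero
    intro e _
    rcases eq_or_ne e.fst u with h1 | h1
    · rcases eq_or_ne e.fst v with h2 | h2
      · exact absurd (h1 ▸ h2) h
      · simp [Sw, h1, h2, h]
    · simp [Sw, h1]

lemma det_one_add_smul_Jm (t : ℂ) :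
    ((1 : Matrix G.Dart G.Dart ℂ) + t • Jm G).det = (1 - t ^ 2) ^ G.edgeFinset.card := by
  classical
  set o : V ≃ Fin (Fintype.card V) := Fintype.equivFin V with ho
  let P := {e : G.Dart // o e.fst < o e.snd}
  let φ : Bool × P ≃ G.Dart :=
    { toFun := fun p => if p.1 then p.2.1 else p.2.1.symm
      invFun := fun d =>
        if h : o d.fst < o d.snd then (true, ⟨d, h⟩)
        else (false, ⟨d.symm, by
          have hne : o d.fst ≠ o d.snd := fun hh => d.fst_ne_snd (o.injective hh)
          have hlt : o d.snd < o d.fst := lt_of_le_of_ne (not_lt.mp h) (Ne.symm hne)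
          simpa [symm_fst, symm_snd] using hlt⟩)
      left_inv := by
        rintro ⟨b, e⟩
        cases b
        · have h1 : ¬ o e.1.symm.fst < o e.1.symm.snd := by
            simp only [symm_fst, symm_snd]
            exact not_lt.mpr (le_of_lt e.2)
          simp only [if_false, Bool.false_eq_true]
          rw [dif_neg h1]
          simp [SimpleGraph.Dart.symm_symm]
        · simp only [if_true]
          rw [dif_pos e.2]
      right_inv := by
        intro d
        by_cases h : o d.fst < o d.snd <;>
          simp [h, SimpleGraph.Dart.symm_symm] }
  have hφt : ∀ (b : Bool) (e : P), φ (b, e) = if b then e.1 else e.1.symm := fun _ _ => rfl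
  have hsymm : ∀ (b : Bool) (e : P), (φ (b, e)).symm = φ (!b, e) := by
    rintro (_ | _) e <;> simp [hφt, SimpleGraph.Dart.symm_symm]
  have hM : ((1 : Matrix G.Dart G.Dart ℂ) + t • Jm G).submatrix φ φ =
      Matrix.blockDiagonal
        (fun _ : P => Matrix.of (fun b b' : Bool => if b = b' then (1 : ℂ) else t)) := by
    ext ⟨b, e⟩ ⟨b', e'⟩
    simp only [Matrix.submatrix_apply, Matrix.add_apply, Matrix.smul_apply, Matrix.one_apply,
      Jm, Matrix.of_apply, Matrix.blockDiagonal_apply, smul_eq_mul]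
    rw [hsymm b e]
    simp only [Equiv.apply_eq_iff_eq, Prod.mk.injEq]
    by_cases he : e = e'
    · subst he
      cases b <;> cases b' <;> simp
    · have he' : e' ≠ e := fun h => he h.symm
      simp [he, he']
  have hdet2 : (Matrix.of (fun b b' : Bool => if b = b' then (1 : ℂ) else t)).det = 1 - t ^ 2 := by
    rw [← Matrix.det_submatrix_equiv_self finTwoEquiv]
    rw [Matrix.det_fin_two]
    simp [finTwoEquiv]
    ring
  have hcard : Fintype.card P = G.edgeFinset.card := by
    have h2 : Fintype.card G.Dart = 2 * G.edgeFinset.card := G.dart_card_eq_twice_card_edges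
    have h3 : Fintype.card (Bool × P) = Fintype.card G.Dart := Fintype.card_congr φ
    rw [Fintype.card_prod, Fintype.card_bool, h2] at h3
    omega
  calc ((1 : Matrix G.Dart G.Dart ℂ) + t • Jm G).det
      = (((1 : Matrix G.Dart G.Dart ℂ) + t • Jm G).submatrix φ φ).det :=
        (Matrix.det_submatrix_equiv_self φ _).symm
    _ = (1 - t ^ 2) ^ G.edgeFinset.card := by
        rw [hM, Matrix.det_blockDiagonal]
        simp [hdet2, Finset.prod_const, Finset.card_univ, hcard]

lemma key (hW : ∀ u v : V, ¬G.Adj u v → W u v = 0) (t : ℂ) (ht : (1 : ℂ) - t ^ 2 ≠ 0) :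
    (1 - t ^ 2) ^ (Fintype.card V) *
        ((1 : Matrix G.Dart G.Dart ℂ) -
          t • (Matrix.of (fun e f : G.Dart => if f.fst = e.snd then W f.fst f.snd else 0) -
            Matrix.of (fun e f : G.Dart => if f = e.symm then (1 : ℂ) else 0))).det =
      (1 - t ^ 2) ^ (G.edgeFinset.card) *
        ((1 : Matrix V V ℂ) - t • W +
          (t ^ 2) • (Matrix.diagonal
              (fun u => ∑ e : G.Dart, if e.fst = u then W e.fst e.snd else 0) -
            (1 : Matrix V V ℂ))).det := by
  classical
  rw [show Matrix.of (fun e f : G.Dart => if f.fst = e.snd then W f.fst f.snd else 0)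
      = Nm G * Sw G W from (Bw_eq G W).symm]
  rw [show Matrix.of (fun e f : G.Dart => if f = e.symm then (1 : ℂ) else 0) = Jm G from rfl]
  set c : ℂ := (1 - t ^ 2)⁻¹ with hc
  have hc1 : c * (1 - t ^ 2) = 1 := inv_mul_cancel₀ ht
  set S := Sw G W with hS
  set N := Nm G with hN
  set J := Jm G with hJ
  set D := Matrix.diagonal (fun u => ∑ e : G.Dart, if e.fst = u then W e.fst e.snd else 0)
    with hD
  have hJJ : J * J = 1 := JJ G
  set A : Matrix G.Dart G.Dart ℂ := 1 + t • J with hA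
  set Y : Matrix G.Dart G.Dart ℂ := 1 - t • J with hY
  have h1 : (t • J) * (t • J) = (t * t) • (1 : Matrix G.Dart G.Dart ℂ) := by
    rw [smul_mul_smul_comm, hJJ]
  have hAY : A * Y = (1 - t ^ 2) • (1 : Matrix G.Dart G.Dart ℂ) := by
    rw [hA, hY, Matrix.mul_sub, Matrix.mul_one, Matrix.add_mul, Matrix.one_mul, h1, pow_two]
    module
  set M1 : Matrix V V ℂ := 1 - (t * c) • (W - t • D) with hM1
  have e2 : (-(t * c)) * (1 - t ^ 2) = -t := by
    rw [neg_mul, mul_assoc, hc1, mul_one]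
  have hfact : (1 : Matrix G.Dart G.Dart ℂ) - t • (N * S - J)
      = A * (1 + ((-(t * c)) • (Y * N)) * S) := by
    have e1 : ((-(t * c)) • (Y * N)) * S = (-(t * c)) • (Y * (N * S)) := by
      rw [Matrix.smul_mul, Matrix.mul_assoc]
    rw [mul_add, mul_one, e1, Matrix.mul_smul, ← Matrix.mul_assoc, hAY, Matrix.smul_mul,
      one_mul, smul_smul, e2, hA]
    module
  have hdetA : A.det = (1 - t ^ 2) ^ G.edgeFinset.card := det_one_add_smul_Jm G t
  have hSYN : S * (Y * N) = W - t • D := by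
    have hYN : Y * N = N - t • (J * N) := by
      rw [hY, Matrix.sub_mul, Matrix.one_mul, Matrix.smul_mul]
    rw [hYN, Matrix.mul_sub, hS, hN, hJ, Sw_mul_Nm G W hW, Matrix.mul_smul,
      Sw_mul_Jm_mul_Nm G W, ← hD]
  have h3 : (1 : Matrix V V ℂ) + S * ((-(t * c)) • (Y * N)) = M1 := by
    rw [Matrix.mul_smul, hSYN, hM1, neg_smul, ← sub_eq_add_neg]
  have e3 : (1 - t ^ 2) * (t * c) = t := by
    rw [mul_comm (1 - t ^ 2) (t * c), mul_assoc, hc1, mul_one]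
  have h5 : (1 - t ^ 2) • M1 = (1 - t ^ 2) • (1 : Matrix V V ℂ) - t • (W - t • D) := by
    rw [hM1, smul_sub, smul_smul, e3]
  have h4 : (1 : Matrix V V ℂ) - t • W + t ^ 2 • (D - 1) = (1 - t ^ 2) • M1 := by
    rw [h5, pow_two]
    module
  calc (1 - t ^ 2) ^ (Fintype.card V) *
      ((1 : Matrix G.Dart G.Dart ℂ) - t • (N * S - J)).det
      = (1 - t ^ 2) ^ (Fintype.card V) *
        ((1 - t ^ 2) ^ G.edgeFinset.card * M1.det) := by
        rw [hfact, Matrix.det_mul, hdetA, Matrix.det_one_add_mul_comm, h3]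
    _ = (1 - t ^ 2) ^ G.edgeFinset.card *
        ((1 - t ^ 2) ^ (Fintype.card V) * M1.det) := by ring
    _ = (1 - t ^ 2) ^ G.edgeFinset.card * ((1 - t ^ 2) • M1).det := by
        rw [Matrix.det_smul]
    _ = (1 - t ^ 2) ^ (G.edgeFinset.card) *
        ((1 : Matrix V V ℂ) - t • W + (t ^ 2) • (D - (1 : Matrix V V ℂ))).det := by
        rw [h4]

end SecondZetaAux

/-- Sato's determinant formula for the second weighted zeta function:
`det(I_{2m} - t(B_w - J_0)) = (1-t²)^{m-n} det(I_n - tW + t²(D_w - I_n))`,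
stated in cross-multiplied form to accommodate the exponent `m - n`. -/
theorem second_weighted_zeta_det {V : Type*} [Fintype V] [DecidableEq V]
    (G : SimpleGraph V) [DecidableRel G.Adj] (hG : G.Connected)
    (W : Matrix V V ℂ) (hW : ∀ u v : V, ¬G.Adj u v → W u v = 0) (t : ℂ) :
    (1 - t ^ 2) ^ (Fintype.card V) *
        ((1 : Matrix G.Dart G.Dart ℂ) -
          t • (Matrix.of (fun e f : G.Dart => if f.fst = e.snd then W f.fst f.snd else 0) -
            Matrix.of (fun e f : G.Dart => if f = e.symm then (1 : ℂ) else 0))).det =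
      (1 - t ^ 2) ^ (G.edgeFinset.card) *
        ((1 : Matrix V V ℂ) - t • W +
          (t ^ 2) • (Matrix.diagonal
              (fun u => ∑ e : G.Dart, if e.fst = u then W e.fst e.snd else 0) -
            (1 : Matrix V V ℂ))).det := by
  classical
  let B0 : Matrix G.Dart G.Dart ℂ :=
    Matrix.of (fun e f : G.Dart => if f.fst = e.snd then W f.fst f.snd else 0) -
      Matrix.of (fun e f : G.Dart => if f = e.symm then (1 : ℂ) else 0)
  let D0 : Matrix V V ℂ :=
    Matrix.diagonal (fun u => ∑ e : G.Dart, if e.fst = u then W e.fst e.snd else 0) -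
      (1 : Matrix V V ℂ)
  let f : ℂ → ℂ := fun s =>
    (1 - s ^ 2) ^ (Fintype.card V) * ((1 : Matrix G.Dart G.Dart ℂ) - s • B0).det
  let g : ℂ → ℂ := fun s =>
    (1 - s ^ 2) ^ (G.edgeFinset.card) * ((1 : Matrix V V ℂ) - s • W + (s ^ 2) • D0).det
  have hf : Continuous f := by
    apply Continuous.mul
    · exact (continuous_const.sub (continuous_pow 2)).pow _
    · exact (continuous_const.sub (continuous_id.smul continuous_const)).matrix_det
  have hg : Continuous g := by
    apply Continuous.mul
    · exact (continuous_const.sub (continuous_pow 2)).pow _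
    · exact ((continuous_const.sub (continuous_id.smul continuous_const)).add
        ((continuous_pow 2).smul continuous_const)).matrix_det
  have hdense : Dense (Set.univ \ (({1, -1} : Finset ℂ) : Set ℂ)) :=
    dense_univ.diff_finset _
  have hfg : f = g := by
    refine Continuous.ext_on hdense hf hg ?_
    rintro s ⟨-, hs⟩
    have hs' : ¬(s = 1 ∨ s = -1) := by simpa using hs
    push_neg at hs'
    have ht : (1 : ℂ) - s ^ 2 ≠ 0 := by
      have hfac : (1 : ℂ) - s ^ 2 = (1 - s) * (1 + s) := by ring
      rw [hfac]
      refine mul_ne_zero (sub_ne_zero.mpr (Ne.symm hs'.1)) fun h => ?_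
      exact hs'.2 (by linear_combination h)
    exact SecondZetaAux.key G W hW s ht
  exact congrFun hfg t
end
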